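/- arXiv:2108.07003 — 3 statements merged into one kernel-verified Lean document; each statement's English description precedes it below -/
import Mathlib

section
/- Let $u_1,u_2,u_3$ be pairwise distinct complex numbers, $V$ a $3\times 3$ complex matrix, and for $k\in\{1,2,3\}$ define $(V_k)_{ij} = V_{ij}(\delta_{ik}-\delta_{jk})/(u_i-u_j)$ for $i\neq j$, $(V_k)_{ii}=0$. Then for every $k$, all diagonal entries of the commutator $[V,V_k] = VV_k - V_kV$ vanish. -/
open Matrix

def divDiffMatrix {n K : Type*} [DecidableEq n] [Field K] (u a : n → K) : Matrix n n K :=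
  Matrix.of fun i j => if i = j then 0 else (a i - a j) / (u i - u j)

theorem isSymm_divDiffMatrix {n K : Type*} [DecidableEq n] [Field K] (u a : n → K) :
    (divDiffMatrix u a).IsSymm := by
  refine IsSymm.ext fun i j => ?_
  simp only [divDiffMatrix, of_apply, eq_comm (a := j)]
  split_ifs
  · rfl
  · rw [← neg_sub (a i), ← neg_sub (u i), neg_div_neg_eq]

/-- Both diagonal entries `(V * (V ⊙ C)) i i` and `((V ⊙ C) * V) i i` equal `∑ j, V i j * V j i * C i j`. -/
theorem Matrix.commutator_hadamard_apply_self_eq_zero {n R : Type*} [Fintype n] [CommRing R]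
    (V C : Matrix n n R) (hC : C.IsSymm) (i : n) :
    (V * (V ⊙ C) - (V ⊙ C) * V) i i = 0 := by
  have hCij : ∀ j, C j i = C i j := fun j => by rw [← transpose_apply C i j, hC.eq]
  simp only [sub_apply, mul_apply, hadamard_apply, hCij]
  rw [sub_eq_zero]
  exact Finset.sum_congr rfl fun j _ => by ring

theorem stmt1_general (u : Fin 3 → ℂ)
    (V : Matrix (Fin 3) (Fin 3) ℂ)
    (Vk : Fin 3 → Matrix (Fin 3) (Fin 3) ℂ)
    (hVk : ∀ k i j : Fin 3, Vk k i j =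
      if i = j then 0
      else V i j * ((if i = k then (1 : ℂ) else 0) - (if j = k then (1 : ℂ) else 0))
        / (u i - u j)) :
    ∀ k i : Fin 3, (V * Vk k - Vk k * V) i i = 0 := by
  intro k i
  have hVk_eq : Vk k = V ⊙ divDiffMatrix u fun j => if j = k then 1 else 0 := by
    ext i j
    rw [hVk, hadamard_apply, divDiffMatrix, of_apply]
    by_cases hij : i = j
    · rw [if_pos hij, if_pos hij, mul_zero]
    · rw [if_neg hij, if_neg hij, mul_div_assoc]
  rw [hVk_eq]
  exact commutator_hadamard_apply_self_eq_zero V _ (isSymm_divDiffMatrix u _) i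

theorem stmt1 (u : Fin 3 → ℂ) (hu : ∀ i j : Fin 3, i ≠ j → u i ≠ u j)
    (V : Matrix (Fin 3) (Fin 3) ℂ)
    (Vk : Fin 3 → Matrix (Fin 3) (Fin 3) ℂ)
    (hVk : ∀ k i j : Fin 3, Vk k i j =
      if i = j then 0
      else V i j * ((if i = k then (1 : ℂ) else 0) - (if j = k then (1 : ℂ) else 0))
        / (u i - u j)) :
    ∀ k i : Fin 3, (V * Vk k - Vk k * V) i i = 0 :=
  stmt1_general u V Vk hVk
end

section
/- Let $\theta_3, \theta_\infty \in \mathbb{C}$ with $\theta_\infty \neq 0$, and let $y_1, y_3$ be differentiable functions on an open set $\Omega \subseteq \mathbb{C}\setminus\{0\}$ satisfying $y_1' = \frac{\theta_\infty-\theta_3}{2\theta_\infty}(y_1+y_3) + \frac{\theta_\infty-\theta_3}{2z}y_1$ and $y_3' = \frac{\theta_\infty+\theta_3}{2\theta_\infty}(y_1+y_3) - \frac{\theta_\infty+\theta_3}{2z}y_3$. If $w(z) = y_1(z)\, z^{-(\theta_\infty-\theta_3)/2}$ (for a fixed branch of the power on a simply connected $\Omega$), then $w$ satisfies $z\,w''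 + (\theta_\infty - z)\,w' - \frac{\theta_\infty-\theta_3}{2}\,w = 0$. -/
/-!
Write `a = (θ∞ - θ₃)/2`, `c = (θ∞ + θ₃)/2`, so that `θ∞ = a + c` and the system reads
`y₁' = (a/θ∞) s + (a/z) y₁`, `y₃' = (c/θ∞) s - (c/z) y₃` with `s = y₁ + y₃`.
The factor `g = z^(-a)` cancels the `y₁/z` term, so `w' = (a/θ∞) s g`, while
`s' = s + (a y₁ - c y₃)/z`. Substituting into `z w'' + (θ∞ - z) w' - a w`, everything
cancels because `θ∞ = a + c ≠ 0`.
-/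

open Filter Topology

section ConfluentReduction

variable {a b c z : ℂ} {y₁ y₃ g : ℂ → ℂ}

theorem hasDerivAt_mul_branch_of_system
    (hy₁ : HasDerivAt y₁ (a / b * (y₁ z + y₃ z) + a / z * y₁ z) z)
    (hg : HasDerivAt g (-a * g z / z) z) :
    HasDerivAt (fun z => y₁ z * g z) (a / b * (y₁ z + y₃ z) * g z) z := by
  refine (hy₁.mul hg).congr_deriv ?_
  ring

theorem hasDerivAt_add_of_system (hb : b ≠ 0) (habc : a + c = b)
    (hy₁ : HasDerivAt y₁ (a / b * (y₁ z + y₃ z) + a / z * y₁ z) z)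
    (hy₃ : HasDerivAt y₃ (c / b * (y₁ z + y₃ z) - c / z * y₃ z) z) :
    HasDerivAt (fun z => y₁ z + y₃ z) (y₁ z + y₃ z + (a * y₁ z - c * y₃ z) / z) z := by
  refine (hy₁.add hy₃).congr_deriv ?_
  subst habc
  field_simp
  ring

theorem exists_hasDerivAt_kummer_of_system (hb : b ≠ 0) (habc : a + c = b) (hz : z ≠ 0)
    (hy₁ : HasDerivAt y₁ (a / b * (y₁ z + y₃ z) + a / z * y₁ z) z)
    (hy₃ : HasDerivAt y₃ (c / b * (y₁ z + y₃ z) - c / z * y₃ z) z)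
    (hg : HasDerivAt g (-a * g z / z) z) :
    ∃ ddw : ℂ, HasDerivAt (fun z => a / b * (y₁ z + y₃ z) * g z) ddw z ∧
      z * ddw + (b - z) * (a / b * (y₁ z + y₃ z) * g z) - a * (y₁ z * g z) = 0 := by
  refine ⟨_, ((hasDerivAt_add_of_system hb habc hy₁ hy₃).const_mul _).mul hg, ?_⟩
  subst habc
  field_simp
  ring

end ConfluentReduction

theorem stmt9_general (θ3 θinf : ℂ) (hθ : θinf ≠ 0)
    (Ω : Set ℂ) (hΩ : IsOpen Ω) (h0 : (0 : ℂ) ∉ Ω)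
    (y1 y3 d1 d3 g w : ℂ → ℂ)
    (hy1 : ∀ z ∈ Ω, HasDerivAt y1 (d1 z) z)
    (hy3 : ∀ z ∈ Ω, HasDerivAt y3 (d3 z) z)
    (hd1 : ∀ z ∈ Ω, d1 z = (θinf - θ3) / (2 * θinf) * (y1 z + y3 z)
        + (θinf - θ3) / (2 * z) * y1 z)
    (hd3 : ∀ z ∈ Ω, d3 z = (θinf + θ3) / (2 * θinf) * (y1 z + y3 z)
        - (θinf + θ3) / (2 * z) * y3 z)
    -- g is a fixed branch of z ^ (-(θinf - θ3)/2) on Ω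
    (hg : ∀ z ∈ Ω, HasDerivAt g ((-(θinf - θ3) / 2) * g z / z) z)
    (hw : ∀ z ∈ Ω, w z = y1 z * g z) :
    ∃ dw : ℂ → ℂ, (∀ z ∈ Ω, HasDerivAt w (dw z) z) ∧
      ∀ z ∈ Ω, ∃ ddw : ℂ, HasDerivAt dw ddw z ∧
        z * ddw + (θinf - z) * dw z - (θinf - θ3) / 2 * w z = 0 := by
  have habc : (θinf - θ3) / 2 + (θinf + θ3) / 2 = θinf := by ring
  have hy1' (z : ℂ) (hz : z ∈ Ω) : HasDerivAt y1
      ((θinf - θ3) / 2 / θinf * (y1 z + y3 z) + (θinf - θ3) / 2 / z * y1 z) z := by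
    convert hy1 z hz using 1
    rw [hd1 z hz]
    ring
  have hy3' (z : ℂ) (hz : z ∈ Ω) : HasDerivAt y3
      ((θinf + θ3) / 2 / θinf * (y1 z + y3 z) - (θinf + θ3) / 2 / z * y3 z) z := by
    convert hy3 z hz using 1
    rw [hd3 z hz]
    ring
  have hg' (z : ℂ) (hz : z ∈ Ω) : HasDerivAt g (-((θinf - θ3) / 2) * g z / z) z := by
    simpa only [neg_div] using hg z hz
  refine ⟨fun z => (θinf - θ3) / 2 / θinf * (y1 z + y3 z) * g z, fun z hz => ?_, fun z hz => ?_⟩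
  · have hw_eq : w =ᶠ[𝓝 z] fun z => y1 z * g z := eventuallyEq_of_mem (hΩ.mem_nhds hz) hw
    exact (hasDerivAt_mul_branch_of_system (hy1' z hz) (hg' z hz)).congr_of_eventuallyEq hw_eq
  · have hz0 : z ≠ 0 := fun h => h0 (h ▸ hz)
    rw [hw z hz]
    exact exists_hasDerivAt_kummer_of_system hθ habc hz0 (hy1' z hz) (hy3' z hz) (hg' z hz)

theorem stmt9 (θ3 θinf : ℂ) (hθ : θinf ≠ 0)
    (Ω : Set ℂ) (hΩ : IsOpen Ω) (h0 : (0 : ℂ) ∉ Ω) (hconn : IsPreconnected Ω)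
    (y1 y3 d1 d3 g w : ℂ → ℂ)
    (hy1 : ∀ z ∈ Ω, HasDerivAt y1 (d1 z) z)
    (hy3 : ∀ z ∈ Ω, HasDerivAt y3 (d3 z) z)
    (hd1 : ∀ z ∈ Ω, d1 z = (θinf - θ3) / (2 * θinf) * (y1 z + y3 z)
        + (θinf - θ3) / (2 * z) * y1 z)
    (hd3 : ∀ z ∈ Ω, d3 z = (θinf + θ3) / (2 * θinf) * (y1 z + y3 z)
        - (θinf + θ3) / (2 * z) * y3 z)
    -- g is a fixed branch of z ^ (-(θinf - θ3)/2) on Ω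
    (hg : ∀ z ∈ Ω, HasDerivAt g ((-(θinf - θ3) / 2) * g z / z) z)
    (hgne : ∀ z ∈ Ω, g z ≠ 0)
    (hw : ∀ z ∈ Ω, w z = y1 z * g z) :
    ∃ dw : ℂ → ℂ, (∀ z ∈ Ω, HasDerivAt w (dw z) z) ∧
      ∀ z ∈ Ω, ∃ ddw : ℂ, HasDerivAt dw ddw z ∧
        z * ddw + (θinf - z) * dw z - (θinf - θ3) / 2 * w z = 0 :=
  stmt9_general θ3 θinf hθ Ω hΩ h0 y1 y3 d1 d3 g w hy1 hy3 hd1 hd3 hg hw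
end

section
/- Let $a \in \mathbb{C}\setminus\{0,1\}$ (with fixed square roots of $a$ and $a-1$), $x \in \mathbb{C}$ with $1+(a-1)x \neq 0$, and define $\Omega(x) = \frac{1}{1+(a-1)x}\begin{pmatrix} 0 & -ix\sqrt{a(a-1)} & -i\sqrt{a} \\ ix\sqrt{a(a-1)} & 0 & (x-1)\sqrt{a-1} \\ i\sqrt{a} & -(x-1)\sqrt{a-1} & 0 \end{pmatrix}$, $U(x) = \mathrm{diag}(0,x,1)$, and $F(x) = \frac{1}{1+(a-1)x}\begin{pmatrix} a & -i\sqrt{a(a-1)} & -i\sqrt{a} \\ -i\sqrt{a(a-1)} & 1-a & -\sqrt{a-1} \\ -i\sqrt{a} & -\sqrt{a-1} & -1 \end{pmatrix}$ (where $\sqrt{a(a-1)}$ denotes $\sqrt{a}\sqrt{a-1}$). Then the matrix function $Y(z) = \left(I + \frac{F(x)}{z}\right)\mathrm{diag}(1, e^{xz}, e^{z})$ satisfies $\frac{dY}{dz} = \left(U(x) + \frac{\Omega(x)}{z}\right)Y$ for all $z\in\mathbb{C}\setminus\{0\}$. -/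
/-!
Since diag(1, e^{xz}, e^z) = exp(zU) solves D' = UD, the claim for Y = (1 + F/z) D reduces to
(U + Ω/z)(1 + F/z) = -F/z² + (1 + F/z)U. Expanding both sides, this holds as soon as Ω = FU - UF
and ΩF = -F, two identities between explicit 3 × 3 matrices that follow from sa² = a and
sb² = a - 1.
-/

open Matrix

attribute [local instance] Matrix.frobeniusNormedRing Matrix.frobeniusNormedAlgebra

section Gauge

variable {𝕜 𝔸 : Type*} [NontriviallyNormedField 𝕜] [NormedRing 𝔸] [NormedAlgebra 𝕜 𝔸]

theorem hasDerivAt_one_add_inv_smul_mul {U Ω F : 𝔸} {D : 𝕜 → 𝔸} {z : 𝕜}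
    (hΩ : Ω = F * U - U * F) (hΩF : Ω * F = -F) (hD : HasDerivAt D (U * D z) z) (hz : z ≠ 0) :
    HasDerivAt (fun w => (1 + w⁻¹ • F) * D w) ((U + z⁻¹ • Ω) * ((1 + z⁻¹ • F) * D z)) z := by
  have hG : HasDerivAt (fun w : 𝕜 => 1 + w⁻¹ • F) (-(z ^ 2)⁻¹ • F) z :=
    ((hasDerivAt_inv hz).smul_const F).const_add 1
  refine (hG.mul hD).congr_deriv ?_
  have key : (U + z⁻¹ • Ω) * (1 + z⁻¹ • F) = -(z ^ 2)⁻¹ • F + (1 + z⁻¹ • F) * U := by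
    simp only [add_mul, mul_add, mul_one, one_mul, smul_mul_assoc, mul_smul_comm, hΩF]
    rw [hΩ]
    module
  rw [← mul_assoc _ U, ← add_mul, ← key, mul_assoc]

end Gauge

theorem hasDerivAt_diagonal_cexp {n : Type*} [Fintype n] [DecidableEq n] (v : n → ℂ) (z : ℂ) :
    HasDerivAt (fun w => diagonal fun i => Complex.exp (v i * w))
      (diagonal v * diagonal fun i => Complex.exp (v i * z)) z := by
  have h (w : ℂ) :
      (diagonal fun i => Complex.exp (v i * w)) = NormedSpace.exp (w • diagonal v) := by
    rw [← diagonal_smul, exp_diagonal, Pi.exp_def, Complex.exp_eq_exp_ℂ]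
    simp only [Pi.smul_apply, smul_eq_mul, mul_comm]
  simp_rw [h]
  exact hasDerivAt_exp_smul_const' (𝕂 := ℂ) (𝔸 := Matrix n n ℂ) (diagonal v) z

namespace RationalPVI

def omegaNumerator (x sa sb : ℂ) : Matrix (Fin 3) (Fin 3) ℂ :=
  !![0, -(Complex.I * x * (sa * sb)), -(Complex.I * sa);
     Complex.I * x * (sa * sb), 0, (x - 1) * sb;
     Complex.I * sa, -((x - 1) * sb), 0]

def fNumerator (a sa sb : ℂ) : Matrix (Fin 3) (Fin 3) ℂ :=
  !![a, -(Complex.I * (sa * sb)), -(Complex.I * sa);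
     -(Complex.I * (sa * sb)), 1 - a, -sb;
     -(Complex.I * sa), -sb, -1]

theorem omegaNumerator_eq_commutator (a x sa sb : ℂ) :
    omegaNumerator x sa sb =
      fNumerator a sa sb * diagonal ![0, x, 1] - diagonal ![0, x, 1] * fNumerator a sa sb := by
  ext i j
  rw [Matrix.sub_apply, mul_diagonal, diagonal_mul]
  fin_cases i <;> fin_cases j <;> simp [omegaNumerator, fNumerator] <;> ring

theorem omegaNumerator_mul_fNumerator {a x sa sb : ℂ} (hsa : sa ^ 2 = a) (hsb : sb ^ 2 = a - 1) :
    omegaNumerator x sa sb * fNumerator a sa sb = -((1 + (a - 1) * x) • fNumerator a sa sb) := by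
  ext i j
  fin_cases i <;> fin_cases j <;>
    simp [omegaNumerator, fNumerator, Matrix.mul_apply, Fin.sum_univ_three] <;>
    grind [Complex.I_sq]

end RationalPVI

open RationalPVI in
theorem stmt17_general (a x : ℂ)
    (hx : 1 + (a - 1) * x ≠ 0)
    (sa sb : ℂ) (hsa : sa ^ 2 = a) (hsb : sb ^ 2 = a - 1)
    (Ω F U : Matrix (Fin 3) (Fin 3) ℂ)
    (hΩ : Ω = (1 + (a - 1) * x)⁻¹ •
      !![0, -(Complex.I * x * (sa * sb)), -(Complex.I * sa);
         Complex.I * x * (sa * sb), 0, (x - 1) * sb;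
         Complex.I * sa, -((x - 1) * sb), 0])
    (hF : F = (1 + (a - 1) * x)⁻¹ •
      !![a, -(Complex.I * (sa * sb)), -(Complex.I * sa);
         -(Complex.I * (sa * sb)), 1 - a, -sb;
         -(Complex.I * sa), -sb, -1])
    (hU : U = Matrix.diagonal ![0, x, 1])
    (Y : ℂ → Matrix (Fin 3) (Fin 3) ℂ)
    (hY : Y = fun z => (1 + z⁻¹ • F) * Matrix.diagonal ![1, Complex.exp (x * z), Complex.exp z]) :
    ∀ z : ℂ, z ≠ 0 → HasDerivAt Y ((U + z⁻¹ • Ω) * Y z) z := by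
  intro z hz
  replace hΩ : Ω = (1 + (a - 1) * x)⁻¹ • omegaNumerator x sa sb := hΩ
  replace hF : F = (1 + (a - 1) * x)⁻¹ • fNumerator a sa sb := hF
  have hcomm : Ω = F * U - U * F := by
    rw [hΩ, hF, hU, omegaNumerator_eq_commutator, smul_sub, smul_mul_assoc, mul_smul_comm]
  have hΩF : Ω * F = -F := by
    rw [hΩ, hF, smul_mul_smul_comm, omegaNumerator_mul_fNumerator hsa hsb, smul_neg, smul_smul,
      mul_assoc, inv_mul_cancel₀ hx, mul_one]
  have hexp (w : ℂ) : ![1, Complex.exp (x * w), Complex.exp w] =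
      fun i => Complex.exp (![0, x, 1] i * w) := by
    funext i; fin_cases i <;> simp
  subst hY hU
  simp_rw [hexp]
  exact hasDerivAt_one_add_inv_smul_mul hcomm hΩF (hasDerivAt_diagonal_cexp _ z) hz

theorem stmt17 (a x : ℂ) (ha0 : a ≠ 0) (ha1 : a ≠ 1)
    (hx : 1 + (a - 1) * x ≠ 0)
    (sa sb : ℂ) (hsa : sa ^ 2 = a) (hsb : sb ^ 2 = a - 1)
    (Ω F U : Matrix (Fin 3) (Fin 3) ℂ)
    (hΩ : Ω = (1 + (a - 1) * x)⁻¹ •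
      !![0, -(Complex.I * x * (sa * sb)), -(Complex.I * sa);
         Complex.I * x * (sa * sb), 0, (x - 1) * sb;
         Complex.I * sa, -((x - 1) * sb), 0])
    (hF : F = (1 + (a - 1) * x)⁻¹ •
      !![a, -(Complex.I * (sa * sb)), -(Complex.I * sa);
         -(Complex.I * (sa * sb)), 1 - a, -sb;
         -(Complex.I * sa), -sb, -1])
    (hU : U = Matrix.diagonal ![0, x, 1])
    (Y : ℂ → Matrix (Fin 3) (Fin 3) ℂ)
    (hY : Y = fun z => (1 + z⁻¹ • F) * Matrix.diagonal ![1, Complex.exp (x * z), Complex.exp z]) :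
    ∀ z : ℂ, z ≠ 0 → HasDerivAt Y ((U + z⁻¹ • Ω) * Y z) z :=
  stmt17_general a x hx sa sb hsa hsb Ω F U hΩ hF hU Y hY
end
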